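/- The operator C vanishes identically on V₁⁻ and on V₁⁺, and satisfies C(X) = -2•X for every X ∈ V₁⁰. (This instantiates, for j = 1, the paper's claim in the proof of Lemma 4.1 that the operator [φ_ρ ∧ ⋆₄[φ_ρ ∧ ⋆₄ · ]] annihilates V_j^± and acts on V_j^0 as the negative of the quadratic Casimir, i.e. by multiplication with -j(j+1).) -/

import Mathlib

/-!
For `j = 1`, the operator `C`, `(CX)ᵢ = [𝔱ᵢ, Σⱼ[𝔱ⱼ, Xⱼ]]` (the pointwise form
of `[φ_ρ ∧ ⋆₄[φ_ρ ∧ ⋆₄ · ]]`), annihilates `V₁⁻` and `V₁⁺` and acts on `V₁⁰`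
as the negative of the quadratic Casimir, i.e. by `-j(j+1) = -2`.
-/

open Complex Matrix

/-- `𝔱₁ = -(i/2)σ₁`. -/
noncomputable def t1 : Matrix (Fin 2) (Fin 2) ℂ := -(I / 2) • !![0, 1; 1, 0]
/-- `𝔱₂ = -(i/2)σ₂`. -/
noncomputable def t2 : Matrix (Fin 2) (Fin 2) ℂ := -(I / 2) • !![0, -I; I, 0]
/-- `𝔱₃ = -(i/2)σ₃`. -/
noncomputable def t3 : Matrix (Fin 2) (Fin 2) ℂ := -(I / 2) • !![1, 0; 0, -1]

/-- The basis `(𝔱₁, 𝔱₂, 𝔱₃)` of `su(2)`, as a function on `Fin 3`. -/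
noncomputable def tt : Fin 3 → Matrix (Fin 2) (Fin 2) ℂ := ![t1, t2, t3]

/-- The operator `C` on `su(2)³`: `(CX)ᵢ = [𝔱ᵢ, Σⱼ [𝔱ⱼ, Xⱼ]]`. -/
noncomputable def Cop (X : Fin 3 → Matrix (Fin 2) (Fin 2) ℂ) :
    Fin 3 → Matrix (Fin 2) (Fin 2) ℂ :=
  fun i => ⁅tt i, ∑ j : Fin 3, ⁅tt j, X j⁆⁆

/-- `V₁⁻ = ℝ-span{(𝔱₁,𝔱₂,𝔱₃)}`. -/
noncomputable def V1m : Submodule ℝ (Fin 3 → Matrix (Fin 2) (Fin 2) ℂ) :=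
  Submodule.span ℝ {![t1, t2, t3]}

/-- `V₁⁰ = ℝ-span{(-𝔱₂,𝔱₁,0), (-𝔱₃,0,𝔱₁), (0,-𝔱₃,𝔱₂)}`. -/
noncomputable def V10 : Submodule ℝ (Fin 3 → Matrix (Fin 2) (Fin 2) ℂ) :=
  Submodule.span ℝ {![-t2, t1, 0], ![-t3, 0, t1], ![0, -t3, t2]}

/-- `V₁⁺ = ℝ-span{(𝔱₁,-𝔱₂,0), (𝔱₁,0,-𝔱₃), (𝔱₂,𝔱₁,0), (𝔱₃,0,𝔱₁), (0,𝔱₃,𝔱₂)}`. -/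
noncomputable def V1p : Submodule ℝ (Fin 3 → Matrix (Fin 2) (Fin 2) ℂ) :=
  Submodule.span ℝ {![t1, -t2, 0], ![t1, 0, -t3], ![t2, t1, 0], ![t3, 0, t1], ![0, t3, t2]}

attribute [local instance] LieRing.ofAssociativeRing

/- ## Auxiliary lemmas -/

lemma lie_t1_t2 : ⁅t1, t2⁆ = t3 := by
  ext i j
  fin_cases i <;> fin_cases j <;>
    simp [t1, t2, t3, Ring.lie_def, Matrix.mul_apply, Fin.sum_univ_two] <;> first
      | linear_combination (I/2) * Complex.I_sq
      | linear_combination (-I/2) * Complex.I_sq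

lemma lie_t2_t3 : ⁅t2, t3⁆ = t1 := by
  ext i j
  fin_cases i <;> fin_cases j <;>
    simp [t1, t2, t3, Ring.lie_def, Matrix.mul_apply, Fin.sum_univ_two] <;> first
      | linear_combination (I/2) * Complex.I_sq
      | linear_combination (-I/2) * Complex.I_sq

lemma lie_t3_t1 : ⁅t3, t1⁆ = t2 := by
  ext i j
  fin_cases i <;> fin_cases j <;>
    simp [t1, t2, t3, Ring.lie_def, Matrix.mul_apply, Fin.sum_univ_two, mul_assoc,
      Complex.I_mul_I] <;> ring

lemma lie_t2_t1 : ⁅t2, t1⁆ = -t3 := by rw [← lie_skew, lie_t1_t2]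
lemma lie_t3_t2 : ⁅t3, t2⁆ = -t1 := by rw [← lie_skew, lie_t2_t3]
lemma lie_t1_t3 : ⁅t1, t3⁆ = -t2 := by rw [← lie_skew, lie_t3_t1]

lemma Cop_apply (X : Fin 3 → Matrix (Fin 2) (Fin 2) ℂ) (i : Fin 3) :
    Cop X i = ⁅tt i, ⁅t1, X 0⁆ + ⁅t2, X 1⁆ + ⁅t3, X 2⁆⁆ := by
  simp [Cop, Fin.sum_univ_three, tt]

lemma Cop_add (X Y : Fin 3 → Matrix (Fin 2) (Fin 2) ℂ) :
    Cop (X + Y) = Cop X + Cop Y := by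
  funext i
  simp [Cop_apply, lie_add, Pi.add_apply]
  abel

lemma Cop_smul (r : ℝ) (X : Fin 3 → Matrix (Fin 2) (Fin 2) ℂ) :
    Cop (r • X) = r • Cop X := by
  funext i
  simp [Cop_apply, Pi.smul_apply, lie_smul, ← smul_add]

lemma Cop_zero : Cop 0 = 0 := by
  funext i
  simp [Cop_apply]

lemma Cop_V1m_gen : Cop ![t1, t2, t3] = 0 := by
  funext i
  rw [Cop_apply]
  simp

lemma Cop_V1p_gen1 : Cop ![t1, -t2, 0] = 0 := by
  funext i
  rw [Cop_apply]
  simp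

lemma Cop_V1p_gen2 : Cop ![t1, 0, -t3] = 0 := by
  funext i
  rw [Cop_apply]
  simp

lemma Cop_V1p_gen3 : Cop ![t2, t1, 0] = 0 := by
  funext i
  rw [Cop_apply]
  simp [lie_t1_t2, lie_t2_t1]

lemma Cop_V1p_gen4 : Cop ![t3, 0, t1] = 0 := by
  funext i
  rw [Cop_apply]
  simp [lie_t1_t3, lie_t3_t1]

lemma Cop_V1p_gen5 : Cop ![0, t3, t2] = 0 := by
  funext i
  rw [Cop_apply]
  simp [lie_t2_t3, lie_t3_t2]

lemma Cop_V10_gen1 : Cop ![-t2, t1, 0] = (-2 : ℝ) • ![-t2, t1, 0] := by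
  funext i
  rw [Cop_apply]
  fin_cases i <;>
    simp [tt, lie_t1_t2, lie_t2_t1, lie_t1_t3, lie_t3_t1, lie_t2_t3, lie_t3_t2,
      lie_add, lie_neg] <;> module

lemma Cop_V10_gen2 : Cop ![-t3, 0, t1] = (-2 : ℝ) • ![-t3, 0, t1] := by
  funext i
  rw [Cop_apply]
  fin_cases i <;>
    simp [tt, lie_t1_t2, lie_t2_t1, lie_t1_t3, lie_t3_t1, lie_t2_t3, lie_t3_t2,
      lie_add, lie_neg] <;> module

lemma Cop_V10_gen3 : Cop ![0, -t3, t2] = (-2 : ℝ) • ![0, -t3, t2] := by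
  funext i
  rw [Cop_apply]
  fin_cases i <;>
    simp [tt, lie_t1_t2, lie_t2_t1, lie_t1_t3, lie_t3_t1, lie_t2_t3, lie_t3_t2,
      lie_add, lie_neg] <;> module

theorem statement12 :
    (∀ X ∈ V1m, Cop X = 0) ∧
    (∀ X ∈ V1p, Cop X = 0) ∧
    (∀ X ∈ V10, Cop X = (-2 : ℝ) • X) := by
  refine ⟨?_, ?_, ?_⟩
  · intro X hX
    induction hX using Submodule.span_induction with
    | mem x hx =>
      simp only [Set.mem_singleton_iff] at hx
      subst hx
      exact Cop_V1m_gen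
    | zero => exact Cop_zero
    | add x y _ _ hx hy => rw [Cop_add, hx, hy, add_zero]
    | smul r x _ hx => rw [Cop_smul, hx, smul_zero]
  · intro X hX
    induction hX using Submodule.span_induction with
    | mem x hx =>
      simp only [Set.mem_insert_iff, Set.mem_singleton_iff] at hx
      rcases hx with h | h | h | h | h <;> subst h
      exacts [Cop_V1p_gen1, Cop_V1p_gen2, Cop_V1p_gen3, Cop_V1p_gen4, Cop_V1p_gen5]
    | zero => exact Cop_zero
    | add x y _ _ hx hy => rw [Cop_add, hx, hy, add_zero]
    | smul r x _ hx => rw [Cop_smul, hx, smul_zero]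
  · intro X hX
    induction hX using Submodule.span_induction with
    | mem x hx =>
      simp only [Set.mem_insert_iff, Set.mem_singleton_iff] at hx
      rcases hx with h | h | h <;> subst h
      exacts [Cop_V10_gen1, Cop_V10_gen2, Cop_V10_gen3]
    | zero => rw [Cop_zero, smul_zero]
    | add x y _ _ hx hy => rw [Cop_add, hx, hy, smul_add]
    | smul r x _ hx => rw [Cop_smul, hx, smul_comm]
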